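/- arXiv:1903.02287 — 6 statements merged into one kernel-verified Lean document; each statement's English description precedes it below -/
import Mathlib

section
/- If a commutative ring R has a nonzero nilpotent element n, then 1, n, n+1 are pairwise distinct nonzero elements and the products 1·n, n·(n+1), (n+1)·1 are all nil clean; hence the nil clean divisor graph of R has girth 3. -/
def IsNilCleanElem {R : Type*} [CommRing R] (x : R) : Prop :=
  ∃ e n : R, IsIdempotentElem e ∧ IsNilpotent n ∧ x = e + n

def NCVertex {R : Type*} [CommRing R] (x : R) : Prop :=
  x ≠ 0 ∧ ∃ y : R, y ≠ 0 ∧ y ≠ x ∧ IsNilCleanElem (x * y)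

def NCAdj {R : Type*} [CommRing R] (x y : R) : Prop :=
  x ≠ y ∧ NCVertex x ∧ NCVertex y ∧ IsNilCleanElem (x * y)

section NilClean

variable {R : Type*} [CommRing R] {n : R}

theorem IsIdempotentElem.isNilCleanElem_add {e : R} (he : IsIdempotentElem e)
    (hn : IsNilpotent n) : IsNilCleanElem (e + n) :=
  ⟨e, n, he, hn, rfl⟩

theorem IsNilpotent.isNilCleanElem (hn : IsNilpotent n) : IsNilCleanElem n := by
  simpa using IsIdempotentElem.zero.isNilCleanElem_add hn

theorem IsNilpotent.isNilCleanElem_one_add (hn : IsNilpotent n) : IsNilCleanElem (1 + n) :=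
  IsIdempotentElem.one.isNilCleanElem_add hn

end NilClean

theorem stmt5_general {R : Type*} [CommRing R] (n : R)
    (hn : IsNilpotent n) (hn0 : n ≠ 0) :
    ((1 : R) ≠ n ∧ n ≠ n + 1 ∧ n + 1 ≠ (1 : R)) ∧
      ((1 : R) ≠ 0 ∧ n ≠ 0 ∧ n + 1 ≠ 0) ∧
      (IsNilCleanElem ((1 : R) * n) ∧ IsNilCleanElem (n * (n + 1)) ∧
        IsNilCleanElem ((n + 1) * 1)) := by
  have : Nontrivial R := nontrivial_of_ne n 0 hn0
  refine ⟨⟨?_, ?_, ?_⟩, ⟨one_ne_zero, hn0, hn.isUnit_add_one.ne_zero⟩, ?_, ?_, ?_⟩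
  · exact fun h => not_isNilpotent_one (h ▸ hn)
  · exact (add_ne_left.mpr one_ne_zero).symm
  · exact add_ne_right.mpr hn0
  · simpa using hn.isNilCleanElem
  · exact ((Commute.all n (n + 1)).isNilpotent_mul_right hn).isNilCleanElem
  · simpa [add_comm] using hn.isNilCleanElem_one_add

theorem stmt5 {R : Type*} [CommRing R] [Nontrivial R] (n : R)
    (hn : IsNilpotent n) (hn0 : n ≠ 0) :
    ((1 : R) ≠ n ∧ n ≠ n + 1 ∧ n + 1 ≠ (1 : R)) ∧
      ((1 : R) ≠ 0 ∧ n ≠ 0 ∧ n + 1 ≠ 0) ∧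
      (IsNilCleanElem ((1 : R) * n) ∧ IsNilCleanElem (n * (n + 1)) ∧
        IsNilCleanElem ((n + 1) * 1)) :=
  stmt5_general n hn hn0
end

section
/- Let R be a finite commutative ring that is weakly nil clean (every element is n + e or n − e with n nilpotent, e idempotent) and |R| even. Then the number of nil clean elements of R is at least |R|/2. -/
open scoped Pointwise

theorem Set.card_le_two_mul_ncard_of_forall_mem_or_neg_mem {α : Type*} [InvolutiveNeg α]
    [Finite α] {s : Set α} (hs : ∀ x, x ∈ s ∨ -x ∈ s) : Nat.card α ≤ 2 * s.ncard := by
  have hcover : s ∪ -s = Set.univ :=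
    Set.eq_univ_of_forall fun x => (hs x).imp id Set.mem_neg.mpr
  calc Nat.card α = (s ∪ -s).ncard := by rw [hcover, Set.ncard_univ]
    _ ≤ s.ncard + (-s).ncard := Set.ncard_union_le _ _
    _ = 2 * s.ncard := by rw [Set.ncard_neg, two_mul]

theorem isNilCleanElem_or_isNilCleanElem_neg {R : Type*} [CommRing R] {x n e : R}
    (hn : IsNilpotent n) (he : IsIdempotentElem e) (hx : x = n + e ∨ x = n - e) :
    IsNilCleanElem x ∨ IsNilCleanElem (-x) := by
  rcases hx with rfl | rfl
  · exact Or.inl ⟨e, n, he, hn, add_comm n e⟩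
  · exact Or.inr ⟨e, -n, he, hn.neg, by ring⟩

theorem stmt10_general {R : Type*} [CommRing R] [Fintype R]
    (hwnc : ∀ x : R, ∃ n e : R, IsNilpotent n ∧ IsIdempotentElem e ∧
      (x = n + e ∨ x = n - e)) :
    Fintype.card R / 2 ≤ Set.ncard {x : R | IsNilCleanElem x} := by
  have hcover : ∀ x : R, x ∈ {x : R | IsNilCleanElem x} ∨ -x ∈ {x : R | IsNilCleanElem x} :=
    fun x =>
      let ⟨_, _, hn, he, hx⟩ := hwnc x
      isNilCleanElem_or_isNilCleanElem_neg hn he hx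
  have hcard := Set.card_le_two_mul_ncard_of_forall_mem_or_neg_mem hcover
  rw [Nat.card_eq_fintype_card] at hcard
  omega

theorem stmt10 {R : Type*} [CommRing R] [Fintype R]
    (hwnc : ∀ x : R, ∃ n e : R, IsNilpotent n ∧ IsIdempotentElem e ∧
      (x = n + e ∨ x = n - e))
    (heven : Even (Fintype.card R)) :
    Fintype.card R / 2 ≤ Set.ncard {x : R | IsNilCleanElem x} :=
  stmt10_general hwnc
end

section
/- In ℤ/(2p) with p an odd prime, the element p is adjacent in the nil clean divisor graph to every other nonzero element: for every nonzero y ≠ p in ℤ/(2p), the product p·y is nil clean. Hence deg(p) = 2p − 2. -/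
theorem IsIdempotentElem.isNilCleanElem {R : Type*} [CommRing R] {e : R}
    (he : IsIdempotentElem e) : IsNilCleanElem e :=
  ⟨e, 0, he, IsNilpotent.zero, (add_zero e).symm⟩

theorem IsIdempotentElem.mul_intCast_of_two_mul_eq_zero {R : Type*} [CommRing R] {e : R}
    (he : IsIdempotentElem e) (h2 : 2 * e = 0) (k : ℤ) : IsIdempotentElem (e * k) := by
  obtain ⟨m, hm⟩ := Int.even_mul_pred_self k
  have hsq : (k : R) * k = k + 2 * m := by
    rw [← sub_eq_iff_eq_add', ← mul_sub_one, two_mul]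
    exact_mod_cast congrArg (Int.cast : ℤ → R) hm
  calc e * k * (e * k) = e * e * (k * k) := by ring
    _ = e * k + 2 * e * m := by rw [he.eq, hsq]; ring
    _ = e * k := by rw [h2, zero_mul, add_zero]

theorem ZMod.two_mul_natCast_self (n : ℕ) : 2 * (n : ZMod (2 * n)) = 0 := by
  exact_mod_cast ZMod.natCast_self (2 * n)

theorem ZMod.isIdempotentElem_natCast_of_odd {n : ℕ} (hn : Odd n) :
    IsIdempotentElem (n : ZMod (2 * n)) := by
  obtain ⟨m, hm⟩ := hn
  calc (n : ZMod (2 * n)) * n = 2 * n * m + n := by rw [hm]; push_cast; ring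
    _ = n := by rw [ZMod.two_mul_natCast_self, zero_mul, zero_add]

theorem ZMod.isIdempotentElem_natCast_mul_of_odd {n : ℕ} (hn : Odd n) (y : ZMod (2 * n)) :
    IsIdempotentElem ((n : ZMod (2 * n)) * y) := by
  rw [← ZMod.intCast_zmod_cast y]
  exact (ZMod.isIdempotentElem_natCast_of_odd hn).mul_intCast_of_two_mul_eq_zero
    (ZMod.two_mul_natCast_self n) _

theorem ZMod.natCast_self_ne_zero_of_two_mul {n : ℕ} (hn : 0 < n) : (n : ZMod (2 * n)) ≠ 0 := by
  rw [Ne, ZMod.natCast_eq_zero_iff]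
  intro h
  have := Nat.le_of_dvd hn h
  omega

theorem stmt12_general (p : ℕ) (hodd : Odd p) :
    (∀ y : ZMod (2 * p), y ≠ 0 → y ≠ (p : ZMod (2 * p)) →
      IsNilCleanElem ((p : ZMod (2 * p)) * y)) ∧
    Set.ncard {y : ZMod (2 * p) | y ≠ 0 ∧ y ≠ (p : ZMod (2 * p)) ∧
      IsNilCleanElem ((p : ZMod (2 * p)) * y)} = 2 * p - 2 := by
  have hnc (y : ZMod (2 * p)) : IsNilCleanElem ((p : ZMod (2 * p)) * y) :=
    (ZMod.isIdempotentElem_natCast_mul_of_odd hodd y).isNilCleanElem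
  refine ⟨fun y _ _ => hnc y, ?_⟩
  have : NeZero (2 * p) := ⟨by have := hodd.pos; omega⟩
  have hset : {y : ZMod (2 * p) | y ≠ 0 ∧ y ≠ (p : ZMod (2 * p)) ∧
      IsNilCleanElem ((p : ZMod (2 * p)) * y)} = ({0, (p : ZMod (2 * p))} : Set _)ᶜ := by
    ext y
    simp [hnc, not_or]
  rw [hset, Set.ncard_compl, Set.ncard_pair (ZMod.natCast_self_ne_zero_of_two_mul hodd.pos).symm,
    Nat.card_zmod]

theorem stmt12 (p : ℕ) (hp : p.Prime) (hodd : Odd p) :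
    (∀ y : ZMod (2 * p), y ≠ 0 → y ≠ (p : ZMod (2 * p)) →
      IsNilCleanElem ((p : ZMod (2 * p)) * y)) ∧
    Set.ncard {y : ZMod (2 * p) | y ≠ 0 ∧ y ≠ (p : ZMod (2 * p)) ∧
      IsNilCleanElem ((p : ZMod (2 * p)) * y)} = 2 * p - 2 :=
  stmt12_general p hodd
end

section
/- In ℤ/(2p) with p an odd prime, the neighborhood of the vertex 1 in the nil clean divisor graph is exactly {p, p+1}: for nonzero y ≠ 1, the product 1·y is nil clean iff y ∈ {p, p+1}. -/
theorem IsNilCleanElem.of_isIdempotentElem {R : Type*} [CommRing R] {x : R}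
    (hx : IsIdempotentElem x) : IsNilCleanElem x :=
  ⟨x, 0, hx, .zero, (add_zero x).symm⟩

theorem isNilCleanElem_iff_isIdempotentElem {R : Type*} [CommRing R] [IsReduced R] {x : R} :
    IsNilCleanElem x ↔ IsIdempotentElem x := by
  refine ⟨?_, .of_isIdempotentElem⟩
  rintro ⟨e, n, he, hn, rfl⟩
  rwa [hn.eq_zero, add_zero]

theorem Prod.isIdempotentElem_iff {A B : Type*} [Mul A] [Mul B] {x : A × B} :
    IsIdempotentElem x ↔ IsIdempotentElem x.1 ∧ IsIdempotentElem x.2 :=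
  Prod.ext_iff

theorem Prod.isIdempotentElem_iff_eq_zero_or_one {A B : Type*} [MonoidWithZero A]
    [MonoidWithZero B] [IsLeftCancelMulZero A] [IsLeftCancelMulZero B] {x : A × B} :
    IsIdempotentElem x ↔ x = 0 ∨ x = (1, 0) ∨ x = (0, 1) ∨ x = 1 := by
  obtain ⟨a, b⟩ := x
  simp only [Prod.isIdempotentElem_iff, IsIdempotentElem.iff_eq_zero_or_one, Prod.mk_eq_zero,
    Prod.mk_eq_one, Prod.mk.injEq]
  tauto

theorem MulEquiv.isIdempotentElem_apply_iff {R S : Type*} [Mul R] [Mul S] (e : R ≃* S) {x : R} :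
    IsIdempotentElem (e x) ↔ IsIdempotentElem x := by
  simp only [IsIdempotentElem, ← map_mul, e.injective.eq_iff]

namespace ZMod

theorem chineseRemainder_natCast_self {p : ℕ} (hodd : Odd p) :
    chineseRemainder hodd.coprime_two_left (p : ZMod (2 * p)) = (1, 0) := by
  rw [map_natCast]
  exact Prod.ext (natCast_eq_one_iff_odd.mpr hodd) (natCast_self p)

variable {p : ℕ} [Fact p.Prime]

theorem isReduced_two_mul_prime (hodd : Odd p) : IsReduced (ZMod (2 * p)) :=
  isReduced_zmod.mpr <| .inl <| Nat.squarefree_mul_iff.mpr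
    ⟨hodd.coprime_two_left, Nat.prime_two.squarefree, (Fact.out : p.Prime).squarefree⟩

theorem isIdempotentElem_two_mul_prime_iff (hodd : Odd p) {y : ZMod (2 * p)} :
    IsIdempotentElem y ↔ y = 0 ∨ y = p ∨ y = p + 1 ∨ y = 1 := by
  set e := chineseRemainder hodd.coprime_two_left
  have hpe : e p = (1, 0) := chineseRemainder_natCast_self hodd
  have hpe1 : e (p + 1) = (0, 1) := by
    rw [map_add, hpe, map_one]
    exact Prod.ext (show (1 + 1 : ZMod 2) = 0 by decide) (zero_add 1)
  rw [← e.toMulEquiv.isIdempotentElem_apply_iff]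
  simp only [← e.injective.eq_iff, map_zero, map_one, hpe, hpe1]
  exact Prod.isIdempotentElem_iff_eq_zero_or_one

end ZMod

theorem stmt13 (p : ℕ) (hp : p.Prime) (hodd : Odd p) :
    ∀ y : ZMod (2 * p), y ≠ 0 → y ≠ 1 →
      (IsNilCleanElem (1 * y) ↔
        y = (p : ZMod (2 * p)) ∨ y = (p : ZMod (2 * p)) + 1) := by
  have : Fact p.Prime := ⟨hp⟩
  have := ZMod.isReduced_two_mul_prime hodd
  intro y hy0 hy1
  rw [one_mul, isNilCleanElem_iff_isIdempotentElem, ZMod.isIdempotentElem_two_mul_prime_iff hodd]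
  tauto
end

section
/- For a prime p > 3 with p ≡ 2 (mod 3), in ℤ/(3p) the element p has exactly 2p − 2 nonzero elements y ≠ p with p·y nil clean, and likewise for 2p; i.e., deg(p) = deg(2p) = 2p − 2 in the nil clean divisor graph. -/
theorem Set.ncard_setOf_ne_and_ne_and {α : Type*} (P : α → Prop) {a b : α} (hab : a ≠ b)
    (ha : P a) (hb : P b) :
    {y : α | y ≠ a ∧ y ≠ b ∧ P y}.ncard = {y | P y}.ncard - 2 := by
  have hsub : ({a, b} : Set α) ⊆ {y | P y} := by
    rintro y (rfl | rfl) <;> assumption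
  rw [← Set.ncard_pair hab, ← Set.ncard_sdiff hsub]
  congr 1
  ext y
  simp only [Set.mem_ofPred_eq, Set.mem_sdiff, Set.mem_insert_iff, Set.mem_singleton_iff]
  tauto

theorem ncard_setOf_isIdempotentElem_mul_of_isUnit {A : Type*} [CommRing A] [IsDomain A] {a : A}
    (ha : IsUnit a) : {u : A | IsIdempotentElem (a * u)}.ncard = 2 := by
  have hbij := IsUnit.isUnit_iff_mulLeft_bijective.mp ha
  rw [show {u : A | IsIdempotentElem (a * u)} = (a * ·) ⁻¹' {0, 1} by
      ext u; simp [IsIdempotentElem.iff_eq_zero_or_one],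
    Set.ncard_preimage_of_injective_subset_range hbij.1 (by simp [hbij.2.range_eq]),
    Set.ncard_pair zero_ne_one]

theorem ZMod.chineseRemainder_natCast_right {m n : ℕ} (h : m.Coprime n) :
    ZMod.chineseRemainder h n = ((n : ZMod m), 0) := by
  rw [map_natCast]
  ext <;> simp

namespace RingEquiv

variable {R A B : Type*} [CommRing R] [CommRing A] [CommRing B] (e : R ≃+* A × B) {x : R} {a : A}

theorem isIdempotentElem_mul_iff_of_apply_eq_inl (hx : e x = (a, 0)) (y : R) :
    IsIdempotentElem (x * y) ↔ IsIdempotentElem (a * (e y).1) := by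
  simp only [IsIdempotentElem, ← e.injective.eq_iff, map_mul, hx, Prod.ext_iff, Prod.fst_mul,
    Prod.snd_mul, zero_mul, mul_zero, and_true]

theorem ncard_setOf_isIdempotentElem_mul_of_apply_eq_inl [IsDomain A] (ha : IsUnit a)
    (hx : e x = (a, 0)) :
    {y : R | IsIdempotentElem (x * y)}.ncard = 2 * Nat.card B := by
  have hset : {y : R | IsIdempotentElem (x * y)} =
      e ⁻¹' ({u | IsIdempotentElem (a * u)} ×ˢ Set.univ) := by
    ext y
    simp [e.isIdempotentElem_mul_iff_of_apply_eq_inl hx]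
  rw [hset, Set.ncard_preimage_of_injective_subset_range e.injective (by simp),
    Set.ncard_prod, Set.ncard_univ, ncard_setOf_isIdempotentElem_mul_of_isUnit ha]

theorem ncard_setOf_ne_zero_ne_isIdempotentElem_mul [IsDomain A] (ha : IsUnit a)
    (haa : IsIdempotentElem (a * a)) (hx : e x = (a, 0)) :
    {y : R | y ≠ 0 ∧ y ≠ x ∧ IsIdempotentElem (x * y)}.ncard = 2 * Nat.card B - 2 := by
  have hx0 : x ≠ 0 := by
    rintro rfl
    exact ha.ne_zero (by simpa using hx.symm)
  have hxx : IsIdempotentElem (x * x) := by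
    rwa [e.isIdempotentElem_mul_iff_of_apply_eq_inl hx, hx]
  rw [Set.ncard_setOf_ne_and_ne_and (fun y => IsIdempotentElem (x * y)) hx0.symm
      (by simpa using IsIdempotentElem.zero) hxx,
    e.ncard_setOf_isIdempotentElem_mul_of_apply_eq_inl ha hx]

end RingEquiv

theorem stmt17_general (p : ℕ) (hp : p.Prime) (hmod : p % 3 = 2) :
    Set.ncard {y : ZMod (3 * p) | y ≠ 0 ∧ y ≠ (p : ZMod (3 * p)) ∧
        IsNilCleanElem ((p : ZMod (3 * p)) * y)} = 2 * p - 2 ∧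
    Set.ncard {y : ZMod (3 * p) | y ≠ 0 ∧ y ≠ 2 * (p : ZMod (3 * p)) ∧
        IsNilCleanElem (2 * (p : ZMod (3 * p)) * y)} = 2 * p - 2 := by
  have : Fact p.Prime := ⟨hp⟩
  let e := ZMod.chineseRemainder ((Nat.coprime_primes Nat.prime_three hp).2 (by omega))
  have : IsReduced (ZMod (3 * p)) := isReduced_of_injective e e.injective
  have hep : e p = (2, 0) := by
    rw [ZMod.chineseRemainder_natCast_right, ← ZMod.natCast_mod, hmod, Nat.cast_ofNat]
  have he2p : e (2 * p) = (1, 0) := by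
    rw [map_mul, hep, map_ofNat]
    exact Prod.ext (show (2 * 2 : ZMod 3) = 1 by decide) (mul_zero _)
  simp only [isNilCleanElem_iff_isIdempotentElem]
  rw [e.ncard_setOf_ne_zero_ne_isIdempotentElem_mul (.of_mul_eq_one (2 : ZMod 3) (by decide))
      (by unfold IsIdempotentElem; decide) hep,
    e.ncard_setOf_ne_zero_ne_isIdempotentElem_mul isUnit_one (by simp) he2p, Nat.card_zmod]
  exact ⟨rfl, rfl⟩

theorem stmt17 (p : ℕ) (hp : p.Prime) (hp3 : 3 < p) (hmod : p % 3 = 2) :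
    Set.ncard {y : ZMod (3 * p) | y ≠ 0 ∧ y ≠ (p : ZMod (3 * p)) ∧
        IsNilCleanElem ((p : ZMod (3 * p)) * y)} = 2 * p - 2 ∧
    Set.ncard {y : ZMod (3 * p) | y ≠ 0 ∧ y ≠ 2 * (p : ZMod (3 * p)) ∧
        IsNilCleanElem (2 * (p : ZMod (3 * p)) * y)} = 2 * p - 2 :=
  stmt17_general p hp hmod
end

section
/- For a prime p > 3 with p ≡ 2 (mod 3), the clique number of the nil clean divisor graph of ℤ/(3p) is exactly 3: {p, 2p−1, 3p−1} is a clique, and there is no set of 4 pairwise adjacent vertices. -/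
/-! Nil clean elements of a reduced ring are idempotent, and by the Chinese remainder
theorem we may work in the reduced ring `ℤ/3 × ℤ/p`. Adjacent vertices `X, Y` there have
`X.1 * Y.1 ∈ {0, 1}` and `X.2 * Y.2 ∈ {0, 1}`. Two distinct vertices with `X.2 = Y.2 = 0`
would have first coordinates `1` and `2`, whose product is `2`; so a 4-clique has three
vertices with nonzero second coordinate. Their second coordinates multiply pairwise to `1`,
hence coincide, so their first coordinates are the three distinct elements of `ℤ/3`, and
`1 * 2 = 2` again. The image of `p` is `(2, 0)` as `p ≡ 2 (mod 3)`, so the triangle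
`p, 2p - 1, 3p - 1` becomes `(2, 0), (0, -1), (2, -1)`, with products `0, (1, 0), (0, 1)`. -/

section General

variable {R S : Type*} [CommRing R] [CommRing S]

lemma IsIdempotentElem.isNilCleanElem_s19 {x : R} (h : IsIdempotentElem x) : IsNilCleanElem x :=
  ⟨x, 0, h, IsNilpotent.zero, (add_zero x).symm⟩

lemma IsNilCleanElem.isIdempotentElem [IsReduced R] {x : R} (h : IsNilCleanElem x) :
    IsIdempotentElem x := by
  obtain ⟨e, n, he, hn, rfl⟩ := h
  rwa [hn.eq_zero, add_zero]

lemma IsNilCleanElem.map {F : Type*} [FunLike F R S] [RingHomClass F R S] (f : F) {x : R}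
    (h : IsNilCleanElem x) : IsNilCleanElem (f x) := by
  obtain ⟨e, n, he, hn, rfl⟩ := h
  exact ⟨f e, f n, he.map f, hn.map f, map_add f e n⟩

lemma NCVertex.map (φ : R ≃+* S) {x : R} (h : NCVertex x) : NCVertex (φ x) := by
  obtain ⟨hx, y, hy, hyx, hxy⟩ := h
  exact ⟨by simpa using hx, φ y, by simpa using hy, by simpa using hyx, by
    simpa using hxy.map φ⟩

lemma NCAdj.map (φ : R ≃+* S) {x y : R} (h : NCAdj x y) : NCAdj (φ x) (φ y) := by
  obtain ⟨hxy, hx, hy, hn⟩ := h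
  exact ⟨by simpa using hxy, hx.map φ, hy.map φ, by simpa using hn.map φ⟩

lemma RingEquiv.ncAdj_iff (φ : R ≃+* S) {x y : R} : NCAdj (φ x) (φ y) ↔ NCAdj x y :=
  ⟨fun h => by simpa using h.map φ.symm, fun h => h.map φ⟩

lemma NCAdj.of_isIdempotentElem {x y : R} (hxy : x ≠ y) (hx : x ≠ 0) (hy : y ≠ 0)
    (h : IsIdempotentElem (x * y)) : NCAdj x y :=
  ⟨hxy, ⟨hx, y, hy, hxy.symm, h.isNilCleanElem_s19⟩,
    ⟨hy, x, hx, hxy, by rw [mul_comm]; exact h.isNilCleanElem_s19⟩, h.isNilCleanElem_s19⟩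

lemma NCAdj.isIdempotentElem [IsReduced R] {x y : R} (h : NCAdj x y) :
    IsIdempotentElem (x * y) :=
  h.2.2.2.isIdempotentElem

end General

lemma ZMod.three_not_isIdempotentElem_mul :
    ∀ u v : ZMod 3, u ≠ 0 → v ≠ 0 → u ≠ v → ¬ IsIdempotentElem (u * v) := by
  unfold IsIdempotentElem; decide

lemma ZMod.three_not_pairwise_isIdempotentElem_mul :
    ∀ u v w : ZMod 3, u ≠ v → u ≠ w → v ≠ w → IsIdempotentElem (u * v) →
      IsIdempotentElem (u * w) → ¬ IsIdempotentElem (v * w) := by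
  unfold IsIdempotentElem; decide

section ZModThreeProd

variable {K : Type*} [CommRing K]

theorem ncAdj_triangle_zmod_three_prod [Nontrivial K] :
    NCAdj ((2, 0) : ZMod 3 × K) (0, -1) ∧ NCAdj ((2, 0) : ZMod 3 × K) (2, -1) ∧
      NCAdj ((0, -1) : ZMod 3 × K) (2, -1) := by
  refine ⟨.of_isIdempotentElem ?_ ?_ ?_ ?_, .of_isIdempotentElem ?_ ?_ ?_ ?_,
    .of_isIdempotentElem ?_ ?_ ?_ ?_⟩ <;>
  simp [Prod.ext_iff, IsIdempotentElem] <;> decide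

variable [IsDomain K]

lemma NCAdj.snd_mul_eq_one {X Y : ZMod 3 × K} (h : NCAdj X Y) (hX : X.2 ≠ 0) (hY : Y.2 ≠ 0) :
    X.2 * Y.2 = 1 :=
  (IsIdempotentElem.iff_eq_zero_or_one.mp (h.isIdempotentElem.map (RingHom.snd _ _))).resolve_left
    (mul_ne_zero hX hY)

lemma NCAdj.snd_ne_zero {X Y : ZMod 3 × K} (h : NCAdj X Y) (hX : X.2 = 0) : Y.2 ≠ 0 := by
  intro hY
  have hX1 : X.1 ≠ 0 := fun h1 => h.2.1.1 (Prod.ext h1 hX)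
  have hY1 : Y.1 ≠ 0 := fun h1 => h.2.2.1.1 (Prod.ext h1 hY)
  exact ZMod.three_not_isIdempotentElem_mul _ _ hX1 hY1
    (fun h1 => h.1 (Prod.ext h1 (hX.trans hY.symm))) (h.isIdempotentElem.map (RingHom.fst _ _))

lemma NCAdj.false_of_snd_ne_zero {X Y Z : ZMod 3 × K} (hXY : NCAdj X Y) (hXZ : NCAdj X Z)
    (hYZ : NCAdj Y Z) (hX : X.2 ≠ 0) (hY : Y.2 ≠ 0) (hZ : Z.2 ≠ 0) : False := by
  have hXZ2 : X.2 = Z.2 :=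
    left_inv_eq_right_inv (hXY.snd_mul_eq_one hX hY) (hYZ.snd_mul_eq_one hY hZ)
  have hYZ2 : Y.2 = Z.2 :=
    left_inv_eq_right_inv (mul_comm X.2 Y.2 ▸ hXY.snd_mul_eq_one hX hY) (hXZ.snd_mul_eq_one hX hZ)
  exact ZMod.three_not_pairwise_isIdempotentElem_mul X.1 Y.1 Z.1
    (fun h => hXY.1 (Prod.ext h (hXZ2.trans hYZ2.symm))) (fun h => hXZ.1 (Prod.ext h hXZ2))
    (fun h => hYZ.1 (Prod.ext h hYZ2)) (hXY.isIdempotentElem.map (RingHom.fst _ _))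
    (hXZ.isIdempotentElem.map (RingHom.fst _ _)) (hYZ.isIdempotentElem.map (RingHom.fst _ _))

theorem not_ncAdj_four_clique_zmod_three_prod {A B C D : ZMod 3 × K} (hAB : NCAdj A B)
    (hAC : NCAdj A C) (hAD : NCAdj A D) (hBC : NCAdj B C) (hBD : NCAdj B D) (hCD : NCAdj C D) :
    False := by
  by_cases hA : A.2 = 0
  · exact NCAdj.false_of_snd_ne_zero hBC hBD hCD (hAB.snd_ne_zero hA) (hAC.snd_ne_zero hA)
      (hAD.snd_ne_zero hA)
  by_cases hB : B.2 = 0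
  · exact NCAdj.false_of_snd_ne_zero hAC hAD hCD hA (hBC.snd_ne_zero hB) (hBD.snd_ne_zero hB)
  by_cases hC : C.2 = 0
  · exact NCAdj.false_of_snd_ne_zero hAB hAD hBD hA hB (hCD.snd_ne_zero hC)
  exact NCAdj.false_of_snd_ne_zero hAB hAC hBC hA hB hC

end ZModThreeProd

theorem stmt19_general (p : ℕ) (hp : p.Prime) (hmod : p % 3 = 2) :
    (NCAdj (p : ZMod (3 * p)) (2 * p - 1) ∧
     NCAdj (p : ZMod (3 * p)) (3 * p - 1) ∧
     NCAdj (2 * (p : ZMod (3 * p)) - 1) (3 * p - 1)) ∧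
    ¬ ∃ a b c d : ZMod (3 * p),
      NCAdj a b ∧ NCAdj a c ∧ NCAdj a d ∧ NCAdj b c ∧ NCAdj b d ∧
        NCAdj c d := by
  have : Fact p.Prime := ⟨hp⟩
  let φ := ZMod.chineseRemainder ((Nat.coprime_primes Nat.prime_three hp).mpr (by omega))
  have hφ : φ p = (2, 0) := by
    rw [map_natCast, Prod.ext_iff]
    simp [← ZMod.natCast_mod p 3, hmod]
  refine ⟨?_, fun ⟨a, b, c, d, hab, hac, had, hbc, hbd, hcd⟩ =>
    not_ncAdj_four_clique_zmod_three_prod (hab.map φ) (hac.map φ) (had.map φ) (hbc.map φ)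
      (hbd.map φ) (hcd.map φ)⟩
  have h2p : φ (2 * p - 1) = (0, -1) := by
    simp only [map_sub, map_mul, map_ofNat, map_one, hφ]
    ext
    · simp only [Prod.fst_sub, Prod.fst_mul, Prod.fst_ofNat, Prod.fst_one]; decide
    · simp
  have h3p : φ (3 * p - 1) = (2, -1) := by
    simp only [map_sub, map_mul, map_ofNat, map_one, hφ]
    ext
    · simp only [Prod.fst_sub, Prod.fst_mul, Prod.fst_ofNat, Prod.fst_one]; decide
    · simp
  simp only [← φ.ncAdj_iff, hφ, h2p, h3p]
  exact ncAdj_triangle_zmod_three_prod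

theorem stmt19 (p : ℕ) (hp : p.Prime) (hp3 : 3 < p) (hmod : p % 3 = 2) :
    (NCAdj (p : ZMod (3 * p)) (2 * p - 1) ∧
     NCAdj (p : ZMod (3 * p)) (3 * p - 1) ∧
     NCAdj (2 * (p : ZMod (3 * p)) - 1) (3 * p - 1)) ∧
    ¬ ∃ a b c d : ZMod (3 * p),
      NCAdj a b ∧ NCAdj a c ∧ NCAdj a d ∧ NCAdj b c ∧ NCAdj b d ∧
        NCAdj c d :=
  stmt19_general p hp hmod
end
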